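/- arXiv:1307.3723 — 8 statements merged into one kernel-verified Lean document; each statement's English description precedes it below -/
import Mathlib

section
/- Let A be a column stochastic nonnegative matrix, h ∈ {1,...,n}, and α ≥ τ_{n−1}(A) = 1 − Σ_i min_j a_{ij}. Define ℓ_i = min_j a_{ij} for i ≠ h and ℓ_h = 1 − Σ_{i≠h} ℓ_i − α. Then the matrix C = A − ℓ eᵀ is entrywise nonnegative. -/
theorem Finset.le_of_eq_of_ne_of_sum_le {ι M : Type*} [Fintype ι] [DecidableEq ι]
    [AddCommMonoid M] [PartialOrder M] [IsOrderedCancelAddMonoid M] {ℓ m : ι → M} {h : ι}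
    (heq : ∀ i, i ≠ h → ℓ i = m i) (hsum : ∑ i, ℓ i ≤ ∑ i, m i) : ℓ ≤ m := by
  have hrest : ∑ i ∈ univ.erase h, ℓ i = ∑ i ∈ univ.erase h, m i :=
    sum_congr rfl fun i hi => heq i (ne_of_mem_erase hi)
  intro i
  by_cases hi : i = h
  · subst hi
    rw [← add_sum_erase _ _ (mem_univ i), ← add_sum_erase _ m (mem_univ i), hrest] at hsum
    exact le_of_add_le_add_right hsum
  · exact (heq i hi).le

theorem stmt_7_general (n : ℕ) [NeZero n] (A : Matrix (Fin n) (Fin n) ℝ)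
    (α : ℝ)
    (hα : 1 - ∑ i, Finset.univ.inf' Finset.univ_nonempty (fun j => A i j) ≤ α)
    (h : Fin n) (ℓ : Fin n → ℝ)
    (hℓ : ∀ i, i ≠ h → ℓ i = Finset.univ.inf' Finset.univ_nonempty (fun j => A i j))
    (hℓh : ℓ h = 1 - (∑ i ∈ Finset.univ.erase h, ℓ i) - α) :
    ∀ i j, 0 ≤ A i j - ℓ i := by
  have hsum : ∑ i, ℓ i = 1 - α := by
    rw [← Finset.add_sum_erase _ _ (Finset.mem_univ h), hℓh]
    ring
  have hℓ_le_min : ℓ ≤ fun i => Finset.univ.inf' Finset.univ_nonempty (fun j => A i j) :=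
    Finset.le_of_eq_of_ne_of_sum_le hℓ (by linarith)
  intro i j
  exact sub_nonneg.2 ((hℓ_le_min i).trans (Finset.inf'_le _ (Finset.mem_univ j)))

/-- Lemma (Rothblum et al.): for column stochastic nonnegative `A`, `h ∈ Fin n`
and `α ≥ τ_{n-1}(A) = 1 - ∑_i min_j A i j`, with `ℓ i = min_j A i j` for `i ≠ h`
and `ℓ h = 1 - ∑_{i ≠ h} ℓ i - α`, the matrix `C = A - ℓ eᵀ` is nonnegative. -/
theorem stmt_7 (n : ℕ) [NeZero n] (A : Matrix (Fin n) (Fin n) ℝ)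
    (hA : ∀ i j, 0 ≤ A i j) (hstoch : ∀ j, ∑ i, A i j = 1)
    (α : ℝ)
    (hα : 1 - ∑ i, Finset.univ.inf' Finset.univ_nonempty (fun j => A i j) ≤ α)
    (h : Fin n) (ℓ : Fin n → ℝ)
    (hℓ : ∀ i, i ≠ h → ℓ i = Finset.univ.inf' Finset.univ_nonempty (fun j => A i j))
    (hℓh : ℓ h = 1 - (∑ i ∈ Finset.univ.erase h, ℓ i) - α) :
    ∀ i j, 0 ≤ A i j - ℓ i :=
  stmt_7_general n A α hα h ℓ hℓ hℓh
end

section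
/- Let A be a column stochastic nonnegative matrix. Every eigenvalue λ of A with λ ≠ 1 satisfies |λ| ≤ τ_{n−1}(A) = 1 − Σ_i min_j a_{ij}. -/
/-!
Let `v` be an eigenvector for `μ ≠ 1`. Since the columns of `A` sum to `1`, summing the
eigenvalue equation gives `μ ∑ vᵢ = ∑ vᵢ`, so `∑ vᵢ = 0`. Hence `v` is also an eigenvector of
the matrix `aᵢⱼ - mᵢ`, where `mᵢ = minⱼ aᵢⱼ`, whose entries are nonnegative and whose columns
all sum to `1 - ∑ mᵢ`; the usual column-sum bound for eigenvalues then gives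
`|μ| ≤ 1 - ∑ mᵢ`.
-/

open Finset

namespace Matrix

variable {ι : Type*} [Fintype ι]

theorem exists_mulVec_eq_smul_of_mem_spectrum [DecidableEq ι] {K : Type*} [Field K]
    {M : Matrix ι ι K} {μ : K} (hμ : μ ∈ spectrum K M) : ∃ v, v ≠ 0 ∧ M *ᵥ v = μ • v := by
  rw [← spectrum_toLin', ← Module.End.hasEigenvalue_iff_mem_spectrum] at hμ
  obtain ⟨v, hv⟩ := hμ.exists_hasEigenvector
  exact ⟨v, hv.2, by simpa using hv.apply_eq_smul⟩

theorem sum_eq_zero_of_mulVec_eq_smul {R : Type*} [CommRing R] [IsDomain R]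
    {M : Matrix ι ι R} (hM : ∀ j, ∑ i, M i j = 1) {v : ι → R} {μ : R}
    (hv : M *ᵥ v = μ • v) (hμ : μ ≠ 1) : ∑ i, v i = 0 := by
  have hcol : 1 ᵥ* M = 1 := funext fun j => by simp [vecMul, dotProduct, hM]
  have h : μ * ∑ i, v i = ∑ i, v i := by
    simpa [← one_dotProduct, hv, hcol] using dotProduct_mulVec 1 M v
  have : (μ - 1) * ∑ i, v i = 0 := by rw [sub_mul, h, one_mul, sub_self]
  exact (mul_eq_zero.1 this).resolve_left (sub_ne_zero.2 hμ)

theorem sub_replicateCol_mulVec_of_sum_eq_zero {R : Type*} [CommRing R] (M : Matrix ι ι R)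
    (c : ι → R) {v : ι → R} (hv : ∑ i, v i = 0) : (M - replicateCol ι c) *ᵥ v = M *ᵥ v := by
  ext i
  simp [mulVec, dotProduct, sub_mul, sum_sub_distrib, ← mul_sum, hv]

theorem norm_le_of_mulVec_eq_smul {𝕜 : Type*} [NormedField 𝕜] {B : Matrix ι ι 𝕜} {r : ℝ}
    (hB : ∀ j, ∑ i, ‖B i j‖ ≤ r) {v : ι → 𝕜} {μ : 𝕜} (hv : B *ᵥ v = μ • v) (hv0 : v ≠ 0) :
    ‖μ‖ ≤ r := by
  have hpos : 0 < ∑ j, ‖v j‖ := by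
    obtain ⟨j, hj⟩ := Function.ne_iff.1 hv0
    exact sum_pos' (fun j _ => norm_nonneg _) ⟨j, mem_univ j, norm_pos_iff.2 hj⟩
  refine le_of_mul_le_mul_right ?_ hpos
  calc ‖μ‖ * ∑ j, ‖v j‖ = ∑ i, ‖(B *ᵥ v) i‖ := by simp [hv, mul_sum]
    _ ≤ ∑ i, ∑ j, ‖B i j‖ * ‖v j‖ :=
        sum_le_sum fun i _ => (norm_sum_le _ _).trans_eq (by simp only [norm_mul])
    _ = ∑ j, (∑ i, ‖B i j‖) * ‖v j‖ := by rw [sum_comm]; simp only [sum_mul]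
    _ ≤ ∑ j, r * ‖v j‖ := sum_le_sum fun j _ => by gcongr; exact hB j
    _ = r * ∑ j, ‖v j‖ := (mul_sum _ _ _).symm

end Matrix

open Matrix

theorem stmt_9_general (n : ℕ) [NeZero n] (A : Matrix (Fin n) (Fin n) ℝ)
    (hstoch : ∀ j, ∑ i, A i j = 1) :
    ∀ μ ∈ spectrum ℂ (A.map (Complex.ofReal)), μ ≠ 1 →
      ‖μ‖ ≤ 1 - ∑ i, Finset.univ.inf' Finset.univ_nonempty (fun j => A i j) := by
  intro μ hμ hμ1
  set m : Fin n → ℝ := fun i => univ.inf' univ_nonempty fun j => A i j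
  obtain ⟨v, hv0, hv⟩ := exists_mulVec_eq_smul_of_mem_spectrum hμ
  have hsum : ∑ i, v i = 0 :=
    sum_eq_zero_of_mulVec_eq_smul (fun j => by simp [← Complex.ofReal_sum, hstoch]) hv hμ1
  refine norm_le_of_mulVec_eq_smul (fun j => le_of_eq ?_)
    ((sub_replicateCol_mulVec_of_sum_eq_zero _ (fun i => (m i : ℂ)) hsum).trans hv) hv0
  calc ∑ i, ‖(A.map Complex.ofReal - replicateCol (Fin n) (fun i => (m i : ℂ))) i j‖
        = ∑ i, (A i j - m i) :=
        sum_congr rfl fun i _ => by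
          rw [Matrix.sub_apply, map_apply, replicateCol_apply, ← Complex.ofReal_sub,
            Complex.norm_real, Real.norm_of_nonneg (sub_nonneg.2 (inf'_le _ (mem_univ j)))]
    _ = 1 - ∑ i, m i := by rw [sum_sub_distrib, hstoch]

/-- For a column stochastic nonnegative matrix `A`, every (complex) eigenvalue
`μ ≠ 1` of `A` satisfies `|μ| ≤ τ_{n-1}(A) = 1 - ∑_i min_j A i j`. -/
theorem stmt_9 (n : ℕ) [NeZero n] (A : Matrix (Fin n) (Fin n) ℝ)
    (hA : ∀ i j, 0 ≤ A i j) (hstoch : ∀ j, ∑ i, A i j = 1) :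
    ∀ μ ∈ spectrum ℂ (A.map (Complex.ofReal)), μ ≠ 1 →
      ‖μ‖ ≤ 1 - ∑ i, Finset.univ.inf' Finset.univ_nonempty (fun j => A i j) :=
  stmt_9_general n A hstoch
end

section
/- Let A be a column stochastic nonnegative matrix with max_i min_j a_{ij} > 0. Let ℓ be the vector ℓ_i = min_j a_{ij} and B the column stochastic matrix with τ_{n−1}(A)·B = A − ℓ eᵀ. Then the matrix I − τ_{n−1}(A)·B is invertible, and if x ≥ 0 satisfies Ax = x and eᵀx = 1, then x = (I − τ_{n−1}(A)·B)^{−1} ℓ. -/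
/-!
Write `ℓ` for the vector of row minima and `τ = 1 - ∑ ℓ`. The matrix `C = τ • B = A - ℓ eᵀ` is
entrywise nonnegative (each `A i j` dominates its row minimum) and, as `B` is column stochastic, has
column sums `τ`, which is `< 1` because `A ≥ 0` and some row minimum is positive.
Hence `1 - C` is strictly column diagonally dominant, so invertible. A probability vector `x` fixed
by `A` satisfies `(ℓ eᵀ) x = ℓ`, i.e. `(1 - C) x = ℓ`.
-/

open Finset

namespace Matrix

variable {ι : Type*} [Fintype ι] [DecidableEq ι]

theorem isUnit_one_sub_of_nonneg_of_sum_col_lt_one {C : Matrix ι ι ℝ} (hC : ∀ i j, 0 ≤ C i j)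
    (hcol : ∀ j, ∑ i, C i j < 1) : IsUnit (1 - C) := by
  rw [isUnit_iff_isUnit_det, isUnit_iff_ne_zero]
  refine det_ne_zero_of_sum_col_lt_diag fun j => ?_
  have hoff : ∀ i ∈ univ.erase j, ‖(1 - C) i j‖ = C i j := fun i hi => by
    rw [sub_apply, one_apply_ne (ne_of_mem_erase hi), zero_sub, norm_neg,
      Real.norm_of_nonneg (hC i j)]
  have hsplit := add_sum_erase univ (fun i => C i j) (mem_univ j)
  calc ∑ i ∈ univ.erase j, ‖(1 - C) i j‖ = ∑ i ∈ univ.erase j, C i j := sum_congr rfl hoff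
    _ < 1 - C j j := by linarith [hcol j]
    _ ≤ ‖(1 - C) j j‖ := by rw [sub_apply, one_apply_eq]; exact Real.le_norm_self _

theorem one_sub_sub_vecMulVec_mulVec_of_fixed {R : Type*} [CommRing R] {A : Matrix ι ι R}
    {x : ι → R} (v : ι → R) (hx : A *ᵥ x = x) (hsum : ∑ i, x i = 1) :
    (1 - (A - vecMulVec v 1)) *ᵥ x = v := by
  rw [sub_mulVec, sub_mulVec, one_mulVec, hx, vecMulVec_mulVec, one_dotProduct, hsum, MulOpposite.op_one, one_smul,
    sub_sub_cancel]

theorem eq_inv_mulVec_of_isUnit {R : Type*} [CommRing R] {M : Matrix ι ι R} (hM : IsUnit M)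
    {x v : ι → R} (h : M *ᵥ x = v) : x = M⁻¹ *ᵥ v :=
  letI := hM.invertible
  (inv_mulVec_eq_vec h.symm).symm

end Matrix

open Matrix

theorem stmt_11_general (n : ℕ) [NeZero n] (A B : Matrix (Fin n) (Fin n) ℝ)
    (hA : ∀ i j, 0 ≤ A i j)
    (hmax : 0 < Finset.univ.sup' Finset.univ_nonempty
      (fun i => Finset.univ.inf' Finset.univ_nonempty (fun j => A i j)))
    (hBstoch : ∀ j, ∑ i, B i j = 1)
    (hτB : ∀ i j,
      (1 - ∑ i', Finset.univ.inf' Finset.univ_nonempty (fun j' => A i' j')) * B i j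
        = A i j - Finset.univ.inf' Finset.univ_nonempty (fun j' => A i j')) :
    IsUnit (1 - (1 - ∑ i', Finset.univ.inf' Finset.univ_nonempty (fun j' => A i' j')) • B) ∧
    ∀ x : Fin n → ℝ, (∀ i, 0 ≤ x i) → A.mulVec x = x → ∑ i, x i = 1 →
      x = (1 - (1 - ∑ i', Finset.univ.inf' Finset.univ_nonempty (fun j' => A i' j')) • B)⁻¹.mulVec
            (fun i => Finset.univ.inf' Finset.univ_nonempty (fun j' => A i j')) := by
  set ℓ : Fin n → ℝ := fun i => univ.inf' univ_nonempty fun j => A i j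
  set τ := 1 - ∑ i, ℓ i
  have hC : τ • B = A - vecMulVec ℓ 1 := by
    ext i j
    simpa [vecMulVec_apply] using hτB i j
  have hℓ_pos : 0 < ∑ i, ℓ i := by
    obtain ⟨i, -, hi⟩ := (lt_sup'_iff _).mp hmax
    exact sum_pos' (fun i _ => le_inf' _ _ fun j _ => hA i j) ⟨i, mem_univ i, hi⟩
  have hcol : ∀ j, ∑ i, (τ • B) i j = τ := fun j => by
    simp only [Matrix.smul_apply, smul_eq_mul, ← mul_sum, hBstoch j, mul_one]
  have hunit : IsUnit (1 - τ • B) := by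
    refine isUnit_one_sub_of_nonneg_of_sum_col_lt_one (fun i j => ?_) fun j => ?_
    · rw [hC, Matrix.sub_apply, vecMulVec_apply, Pi.one_apply, mul_one, sub_nonneg]
      exact inf'_le _ (mem_univ j)
    · linarith [hcol j]
  refine ⟨hunit, fun x _ hx hsum => eq_inv_mulVec_of_isUnit hunit ?_⟩
  rw [hC]
  exact one_sub_sub_vecMulVec_mulVec_of_fixed ℓ hx hsum

/-- Let `A` be column stochastic nonnegative with `max_i min_j A i j > 0`,
`ℓ i = min_j A i j`, and `B` column stochastic with `τ_{n-1}(A) • B = A - ℓ eᵀ`.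
Then `I - τ_{n-1}(A) • B` is invertible and any nonnegative `x` with `A x = x`
and `eᵀ x = 1` satisfies `x = (I - τ_{n-1}(A) • B)⁻¹ ℓ`. -/
theorem stmt_11 (n : ℕ) [NeZero n] (A B : Matrix (Fin n) (Fin n) ℝ)
    (hA : ∀ i j, 0 ≤ A i j) (hstoch : ∀ j, ∑ i, A i j = 1)
    (hmax : 0 < Finset.univ.sup' Finset.univ_nonempty
      (fun i => Finset.univ.inf' Finset.univ_nonempty (fun j => A i j)))
    (hB : ∀ i j, 0 ≤ B i j) (hBstoch : ∀ j, ∑ i, B i j = 1)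
    (hτB : ∀ i j,
      (1 - ∑ i', Finset.univ.inf' Finset.univ_nonempty (fun j' => A i' j')) * B i j
        = A i j - Finset.univ.inf' Finset.univ_nonempty (fun j' => A i j')) :
    IsUnit (1 - (1 - ∑ i', Finset.univ.inf' Finset.univ_nonempty (fun j' => A i' j')) • B) ∧
    ∀ x : Fin n → ℝ, (∀ i, 0 ≤ x i) → A.mulVec x = x → ∑ i, x i = 1 →
      x = (1 - (1 - ∑ i', Finset.univ.inf' Finset.univ_nonempty (fun j' => A i' j')) • B)⁻¹.mulVec
            (fun i => Finset.univ.inf' Finset.univ_nonempty (fun j' => A i j')) :=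
  stmt_11_general n A B hA hmax hBstoch hτB
end

section
/- Let A be a column stochastic nonnegative matrix, ℓ the vector ℓ_i = min_j a_{ij}, and B a column stochastic matrix with τ_{n−1}(A)·B = A − ℓ eᵀ, where 0 < τ_{n−1}(A). If I − τ_{n−1}(A)·B is invertible, then τ_{n−1}(A) < 1 and the vector x = (I − τ_{n−1}(A)·B)^{−1} ℓ is nonnegative, satisfies eᵀx = 1, and Ax = x. -/
/-!
Put `ℓ i = min_j a_{ij}` and `τ = 1 - ∑ ℓ`. Since `eᵀ(I - B) = 0`, invertibility of `I - τB`
forces `τ ≠ 1`, hence `τ < 1`. The vector `x` solves `x = ℓ + τ B x`; summing gives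
`eᵀx = (1 - τ) + τ eᵀx`, i.e. `eᵀx = 1`, and then `A x = τ B x + ℓ (eᵀx) = x`. Nonnegativity is a
maximum principle: the negative part of a solution of `x = b + M x` with `b ≥ 0` and column sums
of `M ≥ 0` below `c < 1` satisfies `∑ min(x, 0) ≥ c ∑ min(x, 0)`, so it vanishes.
-/

open Finset Matrix

section ColumnStochastic

variable {ι : Type*} [Fintype ι]

theorem sum_mulVec_of_sum_col_eq_one {B : Matrix ι ι ℝ} (hB : ∀ j, ∑ i, B i j = 1)
    (x : ι → ℝ) : ∑ i, (B *ᵥ x) i = ∑ i, x i := by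
  simp only [mulVec, dotProduct]
  rw [sum_comm]
  simp only [← sum_mul, hB, one_mul]

theorem not_isUnit_one_sub_of_sum_col_eq_one [Nonempty ι] [DecidableEq ι] {B : Matrix ι ι ℝ}
    (hB : ∀ j, ∑ i, B i j = 1) : ¬IsUnit (1 - B) := by
  intro hunit
  have hker : (fun _ => (1 : ℝ)) ᵥ* (1 - B) = 0 ᵥ* (1 - B) := by
    rw [vecMul_sub, vecMul_one, zero_vecMul]
    ext j
    simp [vecMul, dotProduct, hB]
  have := congrFun (vecMul_injective_of_isUnit hunit hker) (Classical.arbitrary ι)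
  exact one_ne_zero this

theorem nonneg_of_eq_add_mulVec {M : Matrix ι ι ℝ} {b x : ι → ℝ} {c : ℝ}
    (hM : ∀ i j, 0 ≤ M i j) (hcol : ∀ j, ∑ i, M i j ≤ c) (hc : c < 1) (hb : ∀ i, 0 ≤ b i)
    (hx : x = b + M *ᵥ x) (i : ι) : 0 ≤ x i := by
  have hrow : ∀ i, ∑ j, M i j * min (x j) 0 ≤ min (x i) 0 := fun i => by
    refine le_min ?_ (sum_nonpos fun j _ => mul_nonpos_of_nonneg_of_nonpos (hM i j)
      (min_le_right _ _))
    calc ∑ j, M i j * min (x j) 0 ≤ ∑ j, M i j * x j :=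
          sum_le_sum fun j _ => mul_le_mul_of_nonneg_left (min_le_left _ _) (hM i j)
      _ ≤ x i := by
          conv_rhs => rw [hx]
          simpa [mulVec, dotProduct] using hb i
  set S := ∑ j, min (x j) 0
  have hS : c * S ≤ S :=
    calc c * S = ∑ j, c * min (x j) 0 := mul_sum _ _ _
      _ ≤ ∑ j, (∑ i, M i j) * min (x j) 0 :=
          sum_le_sum fun j _ => mul_le_mul_of_nonpos_right (hcol j) (min_le_right _ _)
      _ = ∑ i, ∑ j, M i j * min (x j) 0 := by simp only [sum_mul]; exact sum_comm
      _ ≤ S := sum_le_sum fun i _ => hrow i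
  have hS_zero : S = 0 :=
    le_antisymm (sum_nonpos fun j _ => min_le_right _ _) (by nlinarith)
  have := (sum_eq_zero_iff_of_nonpos fun j _ => min_le_right (x j) 0).1 hS_zero i (mem_univ i)
  exact min_eq_right_iff.1 this

end ColumnStochastic

theorem stmt_12_general (n : ℕ) [NeZero n] (A B : Matrix (Fin n) (Fin n) ℝ)
    (hA : ∀ i j, 0 ≤ A i j)
    (hτpos : 0 < 1 - ∑ i, Finset.univ.inf' Finset.univ_nonempty (fun j => A i j))
    (hB : ∀ i j, 0 ≤ B i j) (hBstoch : ∀ j, ∑ i, B i j = 1)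
    (hτB : ∀ i j,
      (1 - ∑ i', Finset.univ.inf' Finset.univ_nonempty (fun j' => A i' j')) * B i j
        = A i j - Finset.univ.inf' Finset.univ_nonempty (fun j' => A i j'))
    (hinv : IsUnit
      (1 - (1 - ∑ i', Finset.univ.inf' Finset.univ_nonempty (fun j' => A i' j')) • B)) :
    (1 - ∑ i, Finset.univ.inf' Finset.univ_nonempty (fun j => A i j) < 1) ∧
    ∀ x : Fin n → ℝ,
      x = (1 - (1 - ∑ i', Finset.univ.inf' Finset.univ_nonempty (fun j' => A i' j')) • B)⁻¹.mulVec
            (fun i => Finset.univ.inf' Finset.univ_nonempty (fun j' => A i j')) →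
      (∀ i, 0 ≤ x i) ∧ ∑ i, x i = 1 ∧ A.mulVec x = x := by
  set ℓ : Fin n → ℝ := fun i => univ.inf' univ_nonempty (fun j => A i j)
  set τ : ℝ := 1 - ∑ i, ℓ i with hτ
  have hτ_lt : τ < 1 := by
    have hℓ : 0 ≤ ∑ i, ℓ i := sum_nonneg fun i _ => le_inf' _ _ fun j _ => hA i j
    refine lt_of_le_of_ne (by linarith) fun hτ_one => ?_
    rw [hτ_one, one_smul] at hinv
    exact not_isUnit_one_sub_of_sum_col_eq_one hBstoch hinv
  refine ⟨hτ_lt, fun x hx => ?_⟩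
  have hfix : x = ℓ + (τ • B) *ᵥ x := by
    have hCx : (1 - τ • B) *ᵥ x = ℓ := by
      rw [hx, mulVec_mulVec, mul_nonsing_inv _ ((isUnit_iff_isUnit_det _).1 hinv), one_mulVec]
    rw [← hCx, sub_mulVec, one_mulVec, sub_add_cancel]
  have hsum : ∑ i, x i = 1 := by
    have h := congrArg (fun v => ∑ i, v i) hfix
    simp only [Pi.add_apply, sum_add_distrib, smul_mulVec, Pi.smul_apply, smul_eq_mul,
      ← mul_sum, sum_mulVec_of_sum_col_eq_one hBstoch] at h
    have : (1 - τ) * (∑ i, x i - 1) = 0 := by linarith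
    linarith [(mul_eq_zero.1 this).resolve_left (by linarith)]
  refine ⟨nonneg_of_eq_add_mulVec (fun i j => mul_nonneg hτpos.le (hB i j))
    (fun j => by simp [← mul_sum, hBstoch]) hτ_lt
    (fun i => le_inf' _ _ fun j _ => hA i j) hfix, hsum, ?_⟩
  ext i
  have hrow : ∀ j, A i j = τ * B i j + ℓ i := fun j => by linarith [hτB i j]
  calc (A *ᵥ x) i = ∑ j, (τ * B i j + ℓ i) * x j := by simp [mulVec, dotProduct, hrow]
    _ = ℓ i * ∑ j, x j + τ * ∑ j, B i j * x j := by
        simp only [add_mul, sum_add_distrib, mul_sum, mul_assoc, add_comm]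
    _ = x i := by
        rw [hsum, mul_one]
        conv_rhs => rw [hfix]
        simp [mulVec, dotProduct, mul_sum, mul_assoc]

/-- Let `A` be column stochastic nonnegative, `ℓ i = min_j A i j`, `B` column
stochastic with `τ • B = A - ℓ eᵀ` where `τ = τ_{n-1}(A) > 0`.  If `I - τ • B`
is invertible, then `τ < 1` and `x = (I - τ • B)⁻¹ ℓ` is nonnegative with
`eᵀ x = 1` and `A x = x`. -/
theorem stmt_12 (n : ℕ) [NeZero n] (A B : Matrix (Fin n) (Fin n) ℝ)
    (hA : ∀ i j, 0 ≤ A i j) (hstoch : ∀ j, ∑ i, A i j = 1)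
    (hτpos : 0 < 1 - ∑ i, Finset.univ.inf' Finset.univ_nonempty (fun j => A i j))
    (hB : ∀ i j, 0 ≤ B i j) (hBstoch : ∀ j, ∑ i, B i j = 1)
    (hτB : ∀ i j,
      (1 - ∑ i', Finset.univ.inf' Finset.univ_nonempty (fun j' => A i' j')) * B i j
        = A i j - Finset.univ.inf' Finset.univ_nonempty (fun j' => A i j'))
    (hinv : IsUnit
      (1 - (1 - ∑ i', Finset.univ.inf' Finset.univ_nonempty (fun j' => A i' j')) • B)) :
    (1 - ∑ i, Finset.univ.inf' Finset.univ_nonempty (fun j => A i j) < 1) ∧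
    ∀ x : Fin n → ℝ,
      x = (1 - (1 - ∑ i', Finset.univ.inf' Finset.univ_nonempty (fun j' => A i' j')) • B)⁻¹.mulVec
            (fun i => Finset.univ.inf' Finset.univ_nonempty (fun j' => A i j')) →
      (∀ i, 0 ≤ x i) ∧ ∑ i, x i = 1 ∧ A.mulVec x = x :=
  stmt_12_general n A B hA hτpos hB hBstoch hτB hinv
end

section
/- Let A be a column stochastic nonnegative matrix with τ = τ_{n−1}(A) < 1 and B column stochastic with τB = A − ℓeᵀ, ℓ_i = min_j a_{ij}. Then the Neumann series x = Σ_{k≥0} τ^k B^k ℓ converges, is nonnegative, and satisfies eᵀx = 1. -/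
/-! Column-stochastic matrices preserve coordinate sums, so every coordinate of `τ ^ k • M ^ k *ᵥ v`
lies between `0` and `τ ^ k * ∑ v`; the series is dominated by a geometric one, and its sum has
coordinate sum `∑ v / (1 - τ)`. With `v = ℓ` this is `(1 - τ) / (1 - τ) = 1`. -/

namespace Matrix

variable {n : Type*} [Fintype n] [DecidableEq n] {M : Matrix n n ℝ} {v : n → ℝ} {τ : ℝ}

lemma pow_mulVec_apply_le_sum_of_mem_colStochastic (hM : M ∈ colStochastic ℝ n) (hv : 0 ≤ v)
    (k : ℕ) (i : n) : (M ^ k *ᵥ v) i ≤ ∑ j, v j := by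
  have hMk := pow_mem hM k
  rw [← sum_mulVec_of_mem_colStochastic (x := v) hMk]
  exact Finset.single_le_sum (fun j _ => nonneg_mulVec_of_mem_colStochastic hMk hv j)
    (Finset.mem_univ i)

lemma summable_smul_pow_mulVec_of_mem_colStochastic (hM : M ∈ colStochastic ℝ n) (hv : 0 ≤ v)
    (hτ0 : 0 ≤ τ) (hτ1 : τ < 1) : Summable fun k : ℕ => τ ^ k • (M ^ k *ᵥ v) := by
  refine Pi.summable.mpr fun i => ?_
  refine Summable.of_nonneg_of_le (f := fun k : ℕ => τ ^ k * ∑ j, v j) (fun k => ?_) (fun k => ?_)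
    ((summable_geometric_of_lt_one hτ0 hτ1).mul_right _)
  · exact mul_nonneg (pow_nonneg hτ0 k) (nonneg_mulVec_of_mem_colStochastic (pow_mem hM k) hv i)
  · exact mul_le_mul_of_nonneg_left (pow_mulVec_apply_le_sum_of_mem_colStochastic hM hv k i)
      (pow_nonneg hτ0 k)

theorem exists_hasSum_smul_pow_mulVec_of_mem_colStochastic (hM : M ∈ colStochastic ℝ n)
    (hv : 0 ≤ v) (hτ0 : 0 ≤ τ) (hτ1 : τ < 1) :
    ∃ x, HasSum (fun k : ℕ => τ ^ k • (M ^ k *ᵥ v)) x ∧ 0 ≤ x ∧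
      ∑ i, x i = (∑ i, v i) / (1 - τ) := by
  obtain ⟨x, hx⟩ := summable_smul_pow_mulVec_of_mem_colStochastic hM hv hτ0 hτ1
  refine ⟨x, hx, ?_, ?_⟩
  · refine hasSum_le (fun k => ?_) hasSum_zero hx
    exact smul_nonneg (pow_nonneg hτ0 k) (nonneg_mulVec_of_mem_colStochastic (pow_mem hM k) hv)
  · have hsum : HasSum (fun k : ℕ => ∑ i, (τ ^ k • (M ^ k *ᵥ v)) i) (∑ i, x i) :=
      hasSum_sum fun i _ => Pi.hasSum.mp hx i
    have hgeom : HasSum (fun k : ℕ => ∑ i, (τ ^ k • (M ^ k *ᵥ v)) i) ((∑ i, v i) / (1 - τ)) := by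
      simp only [Pi.smul_apply, smul_eq_mul, ← Finset.mul_sum,
        sum_mulVec_of_mem_colStochastic (pow_mem hM _), div_eq_inv_mul]
      exact (hasSum_geometric_of_lt_one hτ0 hτ1).mul_right _
    exact hsum.unique hgeom

end Matrix

theorem stmt_13_general (n : ℕ) [NeZero n] (A B : Matrix (Fin n) (Fin n) ℝ)
    (hA : ∀ i j, 0 ≤ A i j) (hstoch : ∀ j, ∑ i, A i j = 1)
    (hτlt : 1 - ∑ i, Finset.univ.inf' Finset.univ_nonempty (fun j => A i j) < 1)
    (hB : ∀ i j, 0 ≤ B i j) (hBstoch : ∀ j, ∑ i, B i j = 1) :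
    ∃ x : Fin n → ℝ,
      HasSum (fun k : ℕ =>
        (1 - ∑ i', Finset.univ.inf' Finset.univ_nonempty (fun j' => A i' j')) ^ k •
          (B ^ k).mulVec (fun i => Finset.univ.inf' Finset.univ_nonempty (fun j' => A i j'))) x ∧
      (∀ i, 0 ≤ x i) ∧ ∑ i, x i = 1 := by
  set ℓ : Fin n → ℝ := fun i => Finset.univ.inf' Finset.univ_nonempty (fun j => A i j)
  have hℓ : 0 ≤ ℓ := fun i => Finset.le_inf' _ _ fun j _ => hA i j
  have hℓsum : ∑ i, ℓ i ≤ 1 :=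
    (hstoch 0).symm ▸ Finset.sum_le_sum fun i _ => Finset.inf'_le _ (Finset.mem_univ 0)
  obtain ⟨x, hx, hx0, hxsum⟩ := Matrix.exists_hasSum_smul_pow_mulVec_of_mem_colStochastic
    (Matrix.mem_colStochastic_iff_sum.mpr ⟨hB, hBstoch⟩) hℓ (by linarith) hτlt
  refine ⟨x, hx, hx0, ?_⟩
  rw [hxsum, sub_sub_cancel, div_self (by linarith)]

/-- Let `A` be column stochastic nonnegative with `τ = τ_{n-1}(A) < 1`,
`ℓ i = min_j A i j`, and `B` column stochastic with `τ • B = A - ℓ eᵀ`.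
Then the Neumann series `x = ∑_{k ≥ 0} τ^k B^k ℓ` converges, is nonnegative,
and satisfies `eᵀ x = 1`. -/
theorem stmt_13 (n : ℕ) [NeZero n] (A B : Matrix (Fin n) (Fin n) ℝ)
    (hA : ∀ i j, 0 ≤ A i j) (hstoch : ∀ j, ∑ i, A i j = 1)
    (hτlt : 1 - ∑ i, Finset.univ.inf' Finset.univ_nonempty (fun j => A i j) < 1)
    (hB : ∀ i j, 0 ≤ B i j) (hBstoch : ∀ j, ∑ i, B i j = 1)
    (hτB : ∀ i j,
      (1 - ∑ i', Finset.univ.inf' Finset.univ_nonempty (fun j' => A i' j')) * B i j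
        = A i j - Finset.univ.inf' Finset.univ_nonempty (fun j' => A i j')) :
    ∃ x : Fin n → ℝ,
      HasSum (fun k : ℕ =>
        (1 - ∑ i', Finset.univ.inf' Finset.univ_nonempty (fun j' => A i' j')) ^ k •
          (B ^ k).mulVec (fun i => Finset.univ.inf' Finset.univ_nonempty (fun j' => A i j'))) x ∧
      (∀ i, 0 ≤ x i) ∧ ∑ i, x i = 1 :=
  stmt_13_general n A B hA hstoch hτlt hB hBstoch
end

section
/- Let A ∈ M_n(ℂ), ν ⊆ λ(A), W_ν the matrix of generalized Jordan eigenvectors for the eigenvalues in ν, and for a norm ‖·‖ define φ(W_ν, M) = max{‖x* M‖ : ‖x‖ ≤ 1, W_ν* x = 0}. Then ρ(ν̄) = lim_{k→∞} φ(W_ν, A^k)^{1/k}, where ρ(ν̄) is the maximum modulus of eigenvalues of A not in ν. -/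
/-!
Let `Y` invert `X = [W W']` and let `Y₂` be its lower block row. A row vector with `x* W = 0`
satisfies `x* = (x* W') Y₂`, and `Y₂ A = J₂ Y₂`, so `x* Aᵏ = (x* W') J₂ᵏ Y₂`. As all norms on
a finite-dimensional space are equivalent, `φ(W, Aᵏ)` lies between two constant multiples of
`‖J₂ᵏ‖`, and the `k`-th roots of `‖J₂ᵏ‖` tend to the spectral radius of `J₂` by Gelfand's formula.
-/

open Matrix Filter Topology

attribute [local instance] Matrix.linftyOpNormedAddCommGroup Matrix.linftyOpNormedRing
  Matrix.linftyOpNormedAlgebra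

/-- A copy of `E` on which a second norm can be installed without clashing with the given one. -/
def Renormed (E : Type*) : Type _ := E

section Renormed

variable {𝕜 E : Type*} [NontriviallyNormedField 𝕜] [NormedAddCommGroup E] [NormedSpace 𝕜 E]

instance : AddCommGroup (Renormed E) := inferInstanceAs (AddCommGroup E)

instance : Module 𝕜 (Renormed E) := inferInstanceAs (Module 𝕜 E)

instance [FiniteDimensional 𝕜 E] : FiniteDimensional 𝕜 (Renormed E) :=
  inferInstanceAs (FiniteDimensional 𝕜 E)

theorem exists_pos_mul_norm_le_and_le_mul_norm [CompleteSpace 𝕜] [FiniteDimensional 𝕜 E]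
    (N : E → ℝ) (hN0 : ∀ x, N x = 0 ↔ x = 0) (hNh : ∀ (a : 𝕜) x, N (a • x) = ‖a‖ * N x)
    (hNt : ∀ x y, N (x + y) ≤ N x + N y) :
    ∃ c C : ℝ, 0 < c ∧ 0 < C ∧ ∀ x, c * ‖x‖ ≤ N x ∧ N x ≤ C * ‖x‖ := by
  have hN_neg (x : E) : N (-x) = N x := by
    rw [← neg_one_smul 𝕜 x, hNh, norm_neg, norm_one, one_mul]
  let _ : NormedAddCommGroup (Renormed E) := AddGroupNorm.toNormedAddCommGroup
    { toFun := N
      map_zero' := (hN0 0).2 rfl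
      add_le' := hNt
      neg' := hN_neg
      eq_zero_of_map_eq_zero' := fun x => (hN0 x).1 }
  let _ : NormedSpace 𝕜 (Renormed E) := ⟨fun a x => (hNh a x).le⟩
  let e : Renormed E ≃L[𝕜] E := LinearEquiv.toContinuousLinearEquiv (LinearEquiv.refl 𝕜 E)
  obtain ⟨C₁, hC₁, h₁⟩ := e.toContinuousLinearMap.bound
  obtain ⟨C₂, hC₂, h₂⟩ := e.symm.toContinuousLinearMap.bound
  exact ⟨C₁⁻¹, C₂, inv_pos.2 hC₁, hC₂, fun x => ⟨(inv_mul_le_iff₀ hC₁).2 (h₁ x), h₂ x⟩⟩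

end Renormed

theorem tendsto_norm_pow_rpow_inv_sSup_norm_spectrum {A : Type*} [NormedRing A]
    [NormedAlgebra ℂ A] [CompleteSpace A] {a : A} (ha : (spectrum ℂ a).Nonempty) :
    Tendsto (fun k : ℕ => ‖a ^ k‖ ^ (k : ℝ)⁻¹) atTop
      (𝓝 (sSup ((fun z : ℂ => ‖z‖) '' spectrum ℂ a))) := by
  obtain ⟨z, hz, hz_eq⟩ := spectrum.exists_nnnorm_eq_spectralRadius_of_nonempty ha
  have hsSup : sSup ((fun z : ℂ => ‖z‖) '' spectrum ℂ a) = ‖z‖ := by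
    refine IsGreatest.csSup_eq ⟨⟨z, hz, rfl⟩, ?_⟩
    rintro _ ⟨w, hw, rfl⟩
    have : (‖w‖₊ : ENNReal) ≤ ‖z‖₊ := hz_eq ▸ le_iSup₂ (α := ENNReal) w hw
    exact_mod_cast this
  have hG := spectrum.pow_norm_pow_one_div_tendsto_nhds_spectralRadius a
  rw [← hz_eq] at hG
  have := (ENNReal.tendsto_toReal ENNReal.coe_ne_top).comp hG
  simpa [Function.comp_def, hsSup, ENNReal.toReal_ofReal, Real.rpow_nonneg] using this

theorem tendsto_const_rpow_inv_natCast {c : ℝ} (hc : c ≠ 0) :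
    Tendsto (fun k : ℕ => c ^ (k : ℝ)⁻¹) atTop (𝓝 1) := by
  have h := (Real.continuousAt_const_rpow (b := 0) hc).tendsto.comp
    (tendsto_inv_atTop_zero.comp tendsto_natCast_atTop_atTop)
  simpa only [Function.comp_def, Real.rpow_zero] using h

theorem Filter.Tendsto.rpow_inv_of_le_mul_of_le_mul {a f : ℕ → ℝ} {L K : ℝ}
    (ha : Tendsto (fun k : ℕ => a k ^ (k : ℝ)⁻¹) atTop (𝓝 L)) (ha_nonneg : ∀ k, 0 ≤ a k)
    (hK : 0 < K) (hlow : ∀ k, a k ≤ K * f k) (hup : ∀ k, f k ≤ K * a k) :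
    Tendsto (fun k : ℕ => f k ^ (k : ℝ)⁻¹) atTop (𝓝 L) := by
  have hlim (c : ℝ) (hc : 0 < c) : Tendsto (fun k : ℕ => (c * a k) ^ (k : ℝ)⁻¹) atTop (𝓝 L) := by
    simpa only [Real.mul_rpow hc.le (ha_nonneg _), one_mul]
      using (tendsto_const_rpow_inv_natCast hc.ne').mul ha
  have hf_ge (k : ℕ) : K⁻¹ * a k ≤ f k := by rw [inv_mul_le_iff₀ hK]; exact hlow k
  have hlow_nonneg (k : ℕ) : 0 ≤ K⁻¹ * a k := by have := ha_nonneg k; positivity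
  refine tendsto_of_tendsto_of_tendsto_of_le_of_le (hlim K⁻¹ (inv_pos.2 hK)) (hlim K hK)
    (fun k => ?_) (fun k => ?_)
  · exact Real.rpow_le_rpow (hlow_nonneg k) (hf_ge k) (by positivity)
  · exact Real.rpow_le_rpow ((hlow_nonneg k).trans (hf_ge k)) (hup k) (by positivity)

namespace Matrix

section BlockAlgebra

variable {R : Type*} {m n p q : Type*} [Fintype n]

theorem spectrum_transpose {K : Type*} [Field K] [Fintype m] [DecidableEq m]
    (M : Matrix m m K) : spectrum K Mᵀ = spectrum K M := by
  ext z
  rw [spectrum.mem_iff, spectrum.mem_iff, ← isUnit_transpose, transpose_sub, algebraMap_eq_diagonal,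
    diagonal_transpose, transpose_transpose, ← algebraMap_eq_diagonal]

theorem mul_pow_eq_pow_mul_of_mul_eq [Semiring R] [DecidableEq n] [Fintype m] [DecidableEq m]
    {A : Matrix n n R} {B : Matrix m m R} {Y : Matrix m n R} (h : Y * A = B * Y) (k : ℕ) :
    Y * A ^ k = B ^ k * Y := by
  induction k with
  | zero => simp
  | succ k ih =>
    rw [pow_succ, pow_succ, ← Matrix.mul_assoc, ih, Matrix.mul_assoc, h, Matrix.mul_assoc]

theorem fromRows_mul_fromCols_eq_one_iff [Semiring R] [DecidableEq p] [DecidableEq q]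
    {Y₁ : Matrix p n R} {Y₂ : Matrix q n R} {W₁ : Matrix n p R} {W₂ : Matrix n q R} :
    fromRows Y₁ Y₂ * fromCols W₁ W₂ = 1 ↔
      Y₁ * W₁ = 1 ∧ Y₁ * W₂ = 0 ∧ Y₂ * W₁ = 0 ∧ Y₂ * W₂ = 1 := by
  rw [fromRows_mul_fromCols, ← fromBlocks_one, fromBlocks_inj]

theorem vecMul_vecMul_toRows₂_eq_self [Semiring R] [Fintype p] [Fintype q] [DecidableEq n]
    {Y₁ : Matrix p n R} {Y₂ : Matrix q n R} {W₁ : Matrix n p R} {W₂ : Matrix n q R}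
    (h : fromCols W₁ W₂ * fromRows Y₁ Y₂ = 1) {z : n → R} (hz : z ᵥ* W₁ = 0) :
    (z ᵥ* W₂) ᵥ* Y₂ = z := by
  rw [fromCols_mul_fromRows] at h
  calc (z ᵥ* W₂) ᵥ* Y₂ = (z ᵥ* W₁) ᵥ* Y₁ + (z ᵥ* W₂) ᵥ* Y₂ := by rw [hz, zero_vecMul, zero_add]
    _ = z := by rw [vecMul_vecMul, vecMul_vecMul, ← vecMul_add, h, vecMul_one]

theorem mul_eq_mul_of_mul_fromCols_eq [Semiring R] [DecidableEq n] [Fintype p] [Fintype q]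
    [DecidableEq p] [DecidableEq q] {A : Matrix n n R} {J₁ : Matrix p p R} {J₂ : Matrix q q R}
    {Y₁ : Matrix p n R} {Y₂ : Matrix q n R} {W₁ : Matrix n p R} {W₂ : Matrix n q R}
    (hWY : fromCols W₁ W₂ * fromRows Y₁ Y₂ = 1) (hYW : fromRows Y₁ Y₂ * fromCols W₁ W₂ = 1)
    (hA : A * fromCols W₁ W₂ = fromCols W₁ W₂ * fromBlocks J₁ 0 0 J₂) :
    Y₂ * A = J₂ * Y₂ := by
  have hYA : fromRows Y₁ Y₂ * A = fromBlocks J₁ 0 0 J₂ * fromRows Y₁ Y₂ := by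
    calc fromRows Y₁ Y₂ * A = fromRows Y₁ Y₂ * (A * fromCols W₁ W₂) * fromRows Y₁ Y₂ := by
          rw [Matrix.mul_assoc, Matrix.mul_assoc, hWY, Matrix.mul_one]
      _ = fromBlocks J₁ 0 0 J₂ * fromRows Y₁ Y₂ := by
          rw [hA, ← Matrix.mul_assoc, hYW, Matrix.one_mul]
  rw [fromRows_mul, fromBlocks_mul_fromRows] at hYA
  simpa using (fromRows_inj hYA).2

end BlockAlgebra

section RestrictedLeftNorm

variable {n p q : Type*} [Fintype n] [Fintype q]

theorem norm_vecMul_le (v : n → ℂ) (B : Matrix n q ℂ) : ‖v ᵥ* B‖ ≤ ‖Bᵀ‖ * ‖v‖ := by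
  rw [← mulVec_transpose]
  exact linfty_opNorm_mulVec Bᵀ v

theorem exists_pos_norm_vecMul_le (B : Matrix n q ℂ) : ∃ K > 0, ∀ v, ‖v ᵥ* B‖ ≤ K * ‖v‖ :=
  ⟨‖Bᵀ‖ + 1, by positivity, fun v => (norm_vecMul_le v B).trans (by gcongr; linarith)⟩

def restrictedLeftValues (N : (n → ℂ) → ℝ) (W : Matrix n p ℂ) (M : Matrix n n ℂ) : Set ℝ :=
  {r : ℝ | ∃ x : n → ℂ, N x ≤ 1 ∧ Wᴴ *ᵥ x = 0 ∧ r = N (star x ᵥ* M)}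

/-- The paper's `φ(W, M)` for the norm `N`. -/
noncomputable def restrictedLeftNorm (N : (n → ℂ) → ℝ) (W : Matrix n p ℂ) (M : Matrix n n ℂ) :
    ℝ :=
  sSup (restrictedLeftValues N W M)

variable {N : (n → ℂ) → ℝ} {W : Matrix n p ℂ} {W' : Matrix n q ℂ} {Y₂ : Matrix q n ℂ}
  {M : Matrix n n ℂ} {B : Matrix q q ℂ} {c C KY KW : ℝ}

theorem mul_norm_transpose_mem_upperBounds_restrictedLeftValues (hc : 0 < c) (hC : 0 < C)
    (hKY : 0 < KY) (hKW : 0 < KW) (hcN : ∀ x, c * ‖x‖ ≤ N x) (hNC : ∀ x, N x ≤ C * ‖x‖)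
    (hY : ∀ v, ‖v ᵥ* Y₂‖ ≤ KY * ‖v‖) (hW : ∀ u, ‖u ᵥ* W'‖ ≤ KW * ‖u‖)
    (hdecomp : ∀ z, z ᵥ* W = 0 → (z ᵥ* W') ᵥ* Y₂ = z) (hM : Y₂ * M = B * Y₂) :
    C * KY * KW / c * ‖Bᵀ‖ ∈ upperBounds (restrictedLeftValues N W M) := by
  rintro _ ⟨x, hx, hxW, rfl⟩
  have hx_norm : ‖x‖ ≤ c⁻¹ := by
    rw [← one_div, le_div_iff₀ hc]
    linarith [hcN x]
  have hstar : star x ᵥ* W = 0 := by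
    simpa [star_mulVec] using congrArg star hxW
  set u := star x ᵥ* W'
  have hsplit : star x ᵥ* M = (u ᵥ* B) ᵥ* Y₂ := by
    rw [← hdecomp _ hstar, vecMul_vecMul, hM, ← vecMul_vecMul]
  calc N (star x ᵥ* M) ≤ C * (KY * (‖Bᵀ‖ * (KW * ‖x‖))) := by
        rw [hsplit]
        refine (hNC _).trans ?_
        gcongr
        refine (hY _).trans ?_
        gcongr
        refine (norm_vecMul_le _ _).trans ?_
        gcongr
        exact (hW _).trans_eq (by rw [norm_star])
    _ ≤ C * (KY * (‖Bᵀ‖ * (KW * c⁻¹))) := by gcongr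
    _ = C * KY * KW / c * ‖Bᵀ‖ := by ring

theorem norm_transpose_le_mul_restrictedLeftNorm [DecidableEq q] (hc : 0 < c) (hC : 0 < C)
    (hKY : 0 < KY) (hKW : 0 < KW) (hcN : ∀ x, c * ‖x‖ ≤ N x) (hNC : ∀ x, N x ≤ C * ‖x‖)
    (hY : ∀ v, ‖v ᵥ* Y₂‖ ≤ KY * ‖v‖) (hW : ∀ u, ‖u ᵥ* W'‖ ≤ KW * ‖u‖)
    (hY₂W : Y₂ * W = 0) (hY₂W' : Y₂ * W' = 1) (hM : Y₂ * M = B * Y₂)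
    (hbdd : BddAbove (restrictedLeftValues N W M)) :
    ‖Bᵀ‖ ≤ C * KY * KW / c * restrictedLeftNorm N W M := by
  have hφ : 0 ≤ restrictedLeftNorm N W M := by
    have h0 : N 0 ≤ restrictedLeftNorm N W M :=
      le_csSup hbdd ⟨0, (hNC 0).trans (by simp), by simp, by simp⟩
    exact ((mul_nonneg hc.le (norm_nonneg _)).trans (hcN 0)).trans h0
  set ε : ℝ := (C * KY)⁻¹
  have hε : 0 < ε := by positivity
  rw [linfty_opNorm_eq_opNorm]
  refine ContinuousLinearMap.opNorm_le_of_unit_norm (by positivity) fun v hv => ?_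
  set u : q → ℂ := (ε : ℂ) • v
  have hu : ‖u‖ = ε := by simp [u, norm_smul, hv, hε.le]
  set x : n → ℂ := star (u ᵥ* Y₂)
  have hx : N x ≤ 1 := calc
    N x ≤ C * (KY * ‖u‖) := (hNC x).trans (by rw [norm_star]; gcongr; exact hY u)
    _ = 1 := by rw [hu, ← mul_assoc]; exact mul_inv_cancel₀ (by positivity)
  have hxW : Wᴴ *ᵥ x = 0 := by
    rw [mulVec_conjTranspose, star_star, vecMul_vecMul, hY₂W, vecMul_zero, star_zero]
  have hval : star x ᵥ* M = (u ᵥ* B) ᵥ* Y₂ := by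
    rw [star_star, vecMul_vecMul, hM, ← vecMul_vecMul]
  have hrecover : ((u ᵥ* B) ᵥ* Y₂) ᵥ* W' = u ᵥ* B := by
    rw [vecMul_vecMul, hY₂W', vecMul_one]
  have hu_le : ‖u ᵥ* B‖ ≤ KW / c * restrictedLeftNorm N W M := calc
    ‖u ᵥ* B‖ = ‖((u ᵥ* B) ᵥ* Y₂) ᵥ* W'‖ := by rw [hrecover]
    _ ≤ KW * ‖(u ᵥ* B) ᵥ* Y₂‖ := hW _
    _ ≤ KW * (N (star x ᵥ* M) / c) := by
        gcongr
        rw [le_div_iff₀ hc, hval, mul_comm]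
        exact hcN _
    _ ≤ KW * (restrictedLeftNorm N W M / c) := by
        gcongr
        exact le_csSup hbdd ⟨x, hx, hxW, rfl⟩
    _ = KW / c * restrictedLeftNorm N W M := by ring
  have huB : ‖u ᵥ* B‖ = ε * ‖v ᵥ* B‖ := by simp [u, smul_vecMul, norm_smul, hε.le]
  change ‖Bᵀ *ᵥ v‖ ≤ _
  rw [mulVec_transpose]
  calc ‖v ᵥ* B‖ = ε⁻¹ * ‖u ᵥ* B‖ := by rw [huB, inv_mul_cancel_left₀ hε.ne']
    _ ≤ ε⁻¹ * (KW / c * restrictedLeftNorm N W M) := by gcongr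
    _ = C * KY * KW / c * restrictedLeftNorm N W M := by rw [inv_inv]; ring

end RestrictedLeftNorm

end Matrix

theorem stmt_16_general (n p q : ℕ) (A : Matrix (Fin n) (Fin n) ℂ) (ν : Set ℂ)
    (hνbar : (spectrum ℂ A \ ν).Nonempty)
    (W : Matrix (Fin n) (Fin p) ℂ) (W' : Matrix (Fin n) (Fin q) ℂ)
    (J1 : Matrix (Fin p) (Fin p) ℂ) (J2 : Matrix (Fin q) (Fin q) ℂ)
    (hX : ∃ Y : Matrix (Fin p ⊕ Fin q) (Fin n) ℂ,
      Matrix.fromCols W W' * Y = 1 ∧ Y * Matrix.fromCols W W' = 1)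
    (hAX : A * Matrix.fromCols W W'
      = Matrix.fromCols W W' * Matrix.fromBlocks J1 0 0 J2)
    (hJ2 : spectrum ℂ J2 = spectrum ℂ A \ ν)
    (N : (Fin n → ℂ) → ℝ)
    (hN0 : ∀ x, N x = 0 ↔ x = 0)
    (hNh : ∀ (a : ℂ) x, N (a • x) = ‖a‖ * N x)
    (hNt : ∀ x y, N (x + y) ≤ N x + N y) :
    Filter.Tendsto (fun k : ℕ =>
      (sSup {r : ℝ | ∃ x : Fin n → ℂ, N x ≤ 1 ∧ W.conjTranspose.mulVec x = 0 ∧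
        r = N (Matrix.vecMul (star x) (A ^ k))}) ^ ((k : ℝ)⁻¹))
      Filter.atTop (nhds (sSup ((fun z : ℂ => ‖z‖) '' (spectrum ℂ A \ ν)))) := by
  change Tendsto (fun k : ℕ => restrictedLeftNorm N W (A ^ k) ^ (k : ℝ)⁻¹) atTop _
  obtain ⟨Y, hXY, hYX⟩ := hX
  rw [← fromRows_toRows Y] at hXY hYX
  obtain ⟨-, -, hY₂W, hY₂W'⟩ := fromRows_mul_fromCols_eq_one_iff.1 hYX
  have hpow := mul_pow_eq_pow_mul_of_mul_eq (mul_eq_mul_of_mul_fromCols_eq hXY hYX hAX)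
  obtain ⟨c, C, hc, hC, hN⟩ := exists_pos_mul_norm_le_and_le_mul_norm N hN0 hNh hNt
  obtain ⟨KY, hKY, hY⟩ := exists_pos_norm_vecMul_le Y.toRows₂
  obtain ⟨KW, hKW, hW⟩ := exists_pos_norm_vecMul_le W'
  have hupper (k : ℕ) := mul_norm_transpose_mem_upperBounds_restrictedLeftValues (M := A ^ k)
    hc hC hKY hKW (hN · |>.1) (hN · |>.2) hY hW (fun _ => vecMul_vecMul_toRows₂_eq_self hXY)
    (hpow k)
  have hG := tendsto_norm_pow_rpow_inv_sSup_norm_spectrum (a := J2ᵀ)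
    (by rwa [spectrum_transpose, hJ2])
  rw [spectrum_transpose, hJ2] at hG
  simp_rw [← transpose_pow] at hG
  exact hG.rpow_inv_of_le_mul_of_le_mul (fun k => norm_nonneg _) (by positivity)
    (fun k => norm_transpose_le_mul_restrictedLeftNorm hc hC hKY hKW (hN · |>.1) (hN · |>.2)
      hY hW hY₂W hY₂W' (hpow k) ⟨_, hupper k⟩)
    (fun k => Real.sSup_le (hupper k) (by positivity))

/-- Let `A ∈ M_n(ℂ)` with Jordan-type block decomposition as below, `ν̄` nonempty,
and for a norm `N` set `φ(W, M) = max {N (x* M) : N x ≤ 1, W* x = 0}`.  Then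
`ρ(ν̄) = lim_k φ(W, Aᵏ)^{1/k}`. -/
theorem stmt_16 (n p q : ℕ) (A : Matrix (Fin n) (Fin n) ℂ) (ν : Set ℂ)
    (hν : ν ⊆ spectrum ℂ A) (hνbar : (spectrum ℂ A \ ν).Nonempty)
    (W : Matrix (Fin n) (Fin p) ℂ) (W' : Matrix (Fin n) (Fin q) ℂ)
    (J1 : Matrix (Fin p) (Fin p) ℂ) (J2 : Matrix (Fin q) (Fin q) ℂ)
    (hX : ∃ Y : Matrix (Fin p ⊕ Fin q) (Fin n) ℂ,
      Matrix.fromCols W W' * Y = 1 ∧ Y * Matrix.fromCols W W' = 1)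
    (hAX : A * Matrix.fromCols W W'
      = Matrix.fromCols W W' * Matrix.fromBlocks J1 0 0 J2)
    (hJ1 : spectrum ℂ J1 = ν) (hJ2 : spectrum ℂ J2 = spectrum ℂ A \ ν)
    (N : (Fin n → ℂ) → ℝ)
    (hN0 : ∀ x, N x = 0 ↔ x = 0)
    (hNh : ∀ (a : ℂ) x, N (a • x) = ‖a‖ * N x)
    (hNt : ∀ x y, N (x + y) ≤ N x + N y) :
    Filter.Tendsto (fun k : ℕ =>
      (sSup {r : ℝ | ∃ x : Fin n → ℂ, N x ≤ 1 ∧ W.conjTranspose.mulVec x = 0 ∧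
        r = N (Matrix.vecMul (star x) (A ^ k))}) ^ ((k : ℝ)⁻¹))
      Filter.atTop (nhds (sSup ((fun z : ℂ => ‖z‖) '' (spectrum ℂ A \ ν)))) :=
  stmt_16_general n p q A ν hνbar W W' J1 J2 hX hAX hJ2 N hN0 hNh hNt
end

section
/- Let A ∈ M_n(ℝ), ν ⊆ λ(A), and suppose w_1,...,w_p are real columns of W_ν; set W = [w_1 ... w_p]. With ‖x‖_□ = sup_α ‖Re(x)cos α + Im(x)sin α‖ for x ∈ ℂⁿ, one has max{‖x*A‖_□ : x ∈ ℂⁿ, ‖x‖_□ ≤ 1, Wᵀx = 0} = max{‖xᵀA‖ : x ∈ ℝⁿ, ‖x‖ ≤ 1, Wᵀx = 0}. -/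
/-!
For `x = a + i b` the real vectors `Re (e^{-iα} x) = a cos α + b sin α` lie in `ker Wᵀ` when `x`
does, and have `N`-norm at most `‖x‖_□`. Since `A` and `W` are real,
`Re (e^{-iα} x* A) = Re (e^{iα} x)ᵀ A`, and the supremum over `α` defining `‖x* A‖_□` is attained
because the function of `α` is continuous and periodic. Hence every value on the left is a value
on the right, and conversely a real `x` has `‖x‖_□ = N x`. So the two sets of values coincide,
and the suprema agree without any boundedness argument.
-/

open Matrix

theorem Seminorm.continuous_of_finiteDimensional {E : Type*} [NormedAddCommGroup E]
    [NormedSpace ℝ E] [FiniteDimensional ℝ E] (p : Seminorm ℝ E) : Continuous p :=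
  continuousOn_univ.mp (p.convexOn.continuousOn isOpen_univ)

noncomputable def reRot {ι : Type*} (x : ι → ℂ) (α : ℝ) : ι → ℝ :=
  fun i => (x i).re * Real.cos α + (x i).im * Real.sin α

section reRot

variable {ι κ m : Type*}

@[simp]
theorem reRot_zero (α : ℝ) : reRot (0 : ι → ℂ) α = 0 := by
  ext; simp [reRot]

theorem reRot_ofReal (w : ι → ℝ) (α : ℝ) :
    reRot (fun i => (w i : ℂ)) α = Real.cos α • w := by
  ext; simp [reRot, mul_comm]

theorem reRot_star (x : ι → ℂ) (α : ℝ) : reRot (star x) α = reRot x (-α) := by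
  ext; simp [reRot]

theorem reRot_vecMul_map_ofReal [Fintype ι] (x : ι → ℂ) (A : Matrix ι κ ℝ) (α : ℝ) :
    reRot (x ᵥ* A.map Complex.ofReal) α = reRot x α ᵥ* A := by
  ext j
  simp only [reRot, vecMul, dotProduct, map_apply, Complex.re_sum, Complex.im_sum,
    Complex.mul_re, Complex.mul_im, Complex.ofReal_re, Complex.ofReal_im, mul_zero, sub_zero,
    Finset.sum_mul, ← Finset.sum_add_distrib]
  exact Finset.sum_congr rfl fun i _ => by ring

theorem reRot_mulVec_map_ofReal [Fintype ι] (B : Matrix κ ι ℝ) (x : ι → ℂ) (α : ℝ) :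
    reRot (B.map Complex.ofReal *ᵥ x) α = B *ᵥ reRot x α := by
  ext j
  simp only [reRot, mulVec, dotProduct, map_apply, Complex.re_sum, Complex.im_sum,
    Complex.mul_re, Complex.mul_im, Complex.ofReal_re, Complex.ofReal_im, zero_mul, sub_zero,
    add_zero, Finset.sum_mul, ← Finset.sum_add_distrib]
  exact Finset.sum_congr rfl fun i _ => by ring

theorem continuous_reRot (x : ι → ℂ) : Continuous (reRot x) := by
  unfold reRot; fun_prop

theorem reRot_periodic (x : ι → ℂ) : Function.Periodic (reRot x) (2 * Real.pi) := fun α => by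
  ext; simp only [reRot, Real.cos_add_two_pi, Real.sin_add_two_pi]

theorem ofReal_vecMul_map_ofReal [Fintype ι] (w : ι → ℝ) (A : Matrix ι κ ℝ) :
    (fun i => (w i : ℂ)) ᵥ* A.map Complex.ofReal = fun j => ((w ᵥ* A) j : ℂ) := by
  ext j; simp [vecMul, dotProduct]

theorem map_ofReal_mulVec_ofReal [Fintype ι] (B : Matrix m ι ℝ) (w : ι → ℝ) :
    B.map Complex.ofReal *ᵥ (fun i => (w i : ℂ)) = fun j => ((B *ᵥ w) j : ℂ) := by
  ext j; simp [mulVec, dotProduct]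

end reRot

namespace Seminorm

variable {ι κ m : Type*} [Fintype ι] [Fintype κ] (N : Seminorm ℝ (ι → ℝ))

/-- With `reRot x α = Re (e^{-iα} x)`, this is the norm `‖x‖_□` induced by `N`. -/
noncomputable def boxNorm (x : ι → ℂ) : ℝ := ⨆ α, N (reRot x α)

theorem isCompact_range_apply_reRot (x : ι → ℂ) :
    IsCompact (Set.range fun α => N (reRot x α)) :=
  ((reRot_periodic x).comp N).compact_of_continuous Real.two_pi_pos.ne'
    (N.continuous_of_finiteDimensional.comp (continuous_reRot x))

theorem le_boxNorm (x : ι → ℂ) (α : ℝ) : N (reRot x α) ≤ N.boxNorm x :=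
  le_ciSup (N.isCompact_range_apply_reRot x).bddAbove α

theorem exists_apply_reRot_eq_boxNorm (x : ι → ℂ) : ∃ α, N (reRot x α) = N.boxNorm x :=
  (N.isCompact_range_apply_reRot x).sSup_mem (Set.range_nonempty _)

theorem boxNorm_ofReal (w : ι → ℝ) : N.boxNorm (fun i => (w i : ℂ)) = N w := by
  refine le_antisymm (ciSup_le fun α => ?_) ?_
  · rw [reRot_ofReal, map_smul_eq_mul, Real.norm_eq_abs]
    exact mul_le_of_le_one_left (apply_nonneg N w) (Real.abs_cos_le_one α)
  · simpa [reRot_ofReal] using N.le_boxNorm (fun i => (w i : ℂ)) 0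

theorem exists_apply_vecMul_eq_boxNorm (M : Seminorm ℝ (κ → ℝ)) (A : Matrix ι κ ℝ)
    (x : ι → ℂ) : ∃ α, M (reRot x α ᵥ* A) = M.boxNorm (star x ᵥ* A.map Complex.ofReal) := by
  obtain ⟨α, hα⟩ := M.exists_apply_reRot_eq_boxNorm (star x ᵥ* A.map Complex.ofReal)
  exact ⟨-α, by rwa [reRot_vecMul_map_ofReal, reRot_star] at hα⟩

theorem setOf_boxNorm_vecMul_eq (M : Seminorm ℝ (κ → ℝ)) (A : Matrix ι κ ℝ)
    (B : Matrix m ι ℝ) :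
    {r : ℝ | ∃ x : ι → ℂ, N.boxNorm x ≤ 1 ∧ B.map Complex.ofReal *ᵥ x = 0 ∧
        r = M.boxNorm (star x ᵥ* A.map Complex.ofReal)}
      = {r : ℝ | ∃ x : ι → ℝ, N x ≤ 1 ∧ B *ᵥ x = 0 ∧ r = M (x ᵥ* A)} := by
  ext r
  constructor
  · rintro ⟨x, hx, hBx, rfl⟩
    obtain ⟨α, hα⟩ := M.exists_apply_vecMul_eq_boxNorm A x
    refine ⟨reRot x α, (N.le_boxNorm x α).trans hx, ?_, hα.symm⟩
    rw [← reRot_mulVec_map_ofReal, hBx, reRot_zero]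
  · rintro ⟨w, hw, hBw, rfl⟩
    refine ⟨fun i => (w i : ℂ), by rwa [N.boxNorm_ofReal], ?_, ?_⟩
    · ext j; simp [map_ofReal_mulVec_ofReal, hBw]
    · have hstar : star (fun i => (w i : ℂ)) = fun i => (w i : ℂ) := by ext; simp
      rw [hstar, ofReal_vecMul_map_ofReal, M.boxNorm_ofReal]

end Seminorm

theorem stmt_18_general (n p : ℕ) (A : Matrix (Fin n) (Fin n) ℝ)
    (W : Matrix (Fin n) (Fin p) ℝ)
    (N : (Fin n → ℝ) → ℝ)
    (hNh : ∀ (a : ℝ) x, N (a • x) = |a| * N x)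
    (hNt : ∀ x y, N (x + y) ≤ N x + N y)
    (Nsq : (Fin n → ℂ) → ℝ)
    (hNsq : ∀ x : Fin n → ℂ, Nsq x = sSup {r : ℝ | ∃ α : ℝ,
      r = N (fun i => (x i).re * Real.cos α + (x i).im * Real.sin α)}) :
    sSup {r : ℝ | ∃ x : Fin n → ℂ, Nsq x ≤ 1 ∧
        (W.transpose.map Complex.ofReal).mulVec x = 0 ∧
        r = Nsq (Matrix.vecMul (star x) (A.map Complex.ofReal))}
    = sSup {r : ℝ | ∃ x : Fin n → ℝ, N x ≤ 1 ∧
        W.transpose.mulVec x = 0 ∧ r = N (Matrix.vecMul x A)} := by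
  let N' : Seminorm ℝ (Fin n → ℝ) := .of N hNt fun a x => by rw [hNh, Real.norm_eq_abs]
  have hNsq' : Nsq = N'.boxNorm := by
    ext x
    rw [hNsq, Seminorm.boxNorm, iSup]
    congr 1
    ext r
    exact exists_congr fun α => eq_comm
  rw [hNsq']
  exact congrArg sSup (N'.setOf_boxNorm_vecMul_eq N' A W.transpose)

/-- Let `A ∈ M_n(ℝ)`, `W` a real `n × p` matrix (some real columns of `W_ν`),
`N` a norm on `ℝⁿ` and `N□` the induced norm on `ℂⁿ`,
`N□ x = sup_α N (Re x · cos α + Im x · sin α)`.  Then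
`max {N□ (x* A) : x ∈ ℂⁿ, N□ x ≤ 1, Wᵀ x = 0}
  = max {N (xᵀ A) : x ∈ ℝⁿ, N x ≤ 1, Wᵀ x = 0}`. -/
theorem stmt_18 (n p : ℕ) (A : Matrix (Fin n) (Fin n) ℝ)
    (W : Matrix (Fin n) (Fin p) ℝ)
    (N : (Fin n → ℝ) → ℝ)
    (hN0 : ∀ x, N x = 0 ↔ x = 0)
    (hNh : ∀ (a : ℝ) x, N (a • x) = |a| * N x)
    (hNt : ∀ x y, N (x + y) ≤ N x + N y)
    (Nsq : (Fin n → ℂ) → ℝ)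
    (hNsq : ∀ x : Fin n → ℂ, Nsq x = sSup {r : ℝ | ∃ α : ℝ,
      r = N (fun i => (x i).re * Real.cos α + (x i).im * Real.sin α)}) :
    sSup {r : ℝ | ∃ x : Fin n → ℂ, Nsq x ≤ 1 ∧
        (W.transpose.map Complex.ofReal).mulVec x = 0 ∧
        r = Nsq (Matrix.vecMul (star x) (A.map Complex.ofReal))}
    = sSup {r : ℝ | ∃ x : Fin n → ℝ, N x ≤ 1 ∧
        W.transpose.mulVec x = 0 ∧ r = N (Matrix.vecMul x A)} :=
  stmt_18_general n p A W N hNh hNt Nsq hNsq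
end

section
/- Let A ∈ M_n(ℝ) be nonnegative and x ≥ 0 a right eigenvector with Ax = ρ(A)x. Then for any norm ‖·‖ on ℝⁿ, every eigenvalue λ of A with λ ≠ ρ(A) (counting only eigenvalues other than the spectral radius) satisfies |λ| ≤ τ(x,A) := max{‖zᵀA‖ : z ∈ ℝⁿ, ‖z‖ ≤ 1, zᵀx = 0}. -/
/-!
A left eigenvector `z` of `A` for an eigenvalue `μ ≠ ρ` is orthogonal to `x`, and so are the real
vectors `Re (c z)` for `|c| = 1`; moreover `Re (c z) A = Re (c μ z)`. Take `c₀` maximising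
`c ↦ N (Re (c z))` on the unit circle and rotate it by the argument of `μ`: for the resulting `c₁`,
`|μ| N (Re (c₀ z)) = N (Re (c₁ z) A) ≤ τ N (Re (c₁ z)) ≤ τ N (Re (c₀ z))`.
Boundedness of the set defining `τ` comes from the compactness of the unit ball of a norm on a
finite-dimensional space.
-/

open Matrix

namespace Seminorm

variable {E : Type*} [NormedAddCommGroup E] [NormedSpace ℝ E] [FiniteDimensional ℝ E]

theorem continuous_of_finiteDimensional_s19 (p : Seminorm ℝ E) : Continuous p := by
  simpa [continuousOn_univ] using p.convexOn.continuousOn_interior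

variable {p : Seminorm ℝ E}

theorem exists_pos_mul_norm_le (hp : ∀ y, p y = 0 → y = 0) : ∃ c > 0, ∀ y, c * ‖y‖ ≤ p y := by
  rcases subsingleton_or_nontrivial E with hE | hE
  · exact ⟨1, one_pos, fun y => by simp [Subsingleton.elim y 0]⟩
  obtain ⟨e, he, hmin⟩ := (isCompact_sphere (0 : E) 1).exists_isMinOn
    (NormedSpace.sphere_nonempty.mpr zero_le_one) p.continuous_of_finiteDimensional_s19.continuousOn
  have he0 : e ≠ 0 := ne_zero_of_mem_unit_sphere ⟨e, he⟩
  refine ⟨p e, (apply_nonneg p e).lt_of_ne fun h => he0 (hp e h.symm), fun y => ?_⟩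
  rcases eq_or_ne y 0 with rfl | hy
  · simp
  have hy' : 0 < ‖y‖ := norm_pos_iff.mpr hy
  have hmem : ‖y‖⁻¹ • y ∈ Metric.sphere (0 : E) 1 := by
    simp [norm_smul, hy'.ne']
  have hle : p e ≤ p (‖y‖⁻¹ • y) := hmin hmem
  rwa [map_smul_eq_mul, norm_inv, norm_norm, le_inv_mul_iff₀ hy', mul_comm] at hle

theorem isCompact_closedBall_of_finiteDimensional (hp : ∀ y, p y = 0 → y = 0) (r : ℝ) :
    IsCompact (p.closedBall 0 r) := by
  obtain ⟨c, hc, hcp⟩ := exists_pos_mul_norm_le hp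
  refine Metric.isCompact_of_isClosed_isBounded ?_ ?_
  · simpa only [closedBall_zero_eq] using
      isClosed_le p.continuous_of_finiteDimensional_s19 continuous_const
  · refine (Metric.isBounded_closedBall (x := (0 : E)) (r := r / c)).subset fun y hy => ?_
    rw [mem_closedBall_zero] at hy
    rw [mem_closedBall_zero_iff, le_div_iff₀' hc]
    exact (hcp y).trans hy

end Seminorm

theorem Matrix.exists_vecMul_eq_smul_of_mem_spectrum {K ι : Type*} [Field K] [Fintype ι]
    [DecidableEq ι] {M : Matrix ι ι K} {μ : K} (h : μ ∈ spectrum K M) :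
    ∃ z ≠ 0, z ᵥ* M = μ • z := by
  rw [mem_spectrum_iff_isRoot_charpoly, ← charpoly_transpose, ← mem_spectrum_iff_isRoot_charpoly,
    ← spectrum_toLin', ← Module.End.hasEigenvalue_iff_mem_spectrum] at h
  obtain ⟨z, hz⟩ := h.exists_hasEigenvector
  exact ⟨z, hz.2, by rw [← mulVec_transpose]; exact hz.apply_eq_smul⟩

theorem Matrix.dotProduct_eq_zero_of_vecMul_eq_smul_of_mulVec_eq_smul {R ι : Type*} [CommRing R]
    [IsDomain R] [Fintype ι] {M : Matrix ι ι R} {μ ρ : R} {z x : ι → R}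
    (hz : z ᵥ* M = μ • z) (hx : M *ᵥ x = ρ • x) (hμρ : μ ≠ ρ) : z ⬝ᵥ x = 0 := by
  have h : μ * (z ⬝ᵥ x) = ρ * (z ⬝ᵥ x) := by
    rw [← smul_eq_mul, ← smul_dotProduct, ← hz, ← dotProduct_mulVec, hx, dotProduct_smul,
      smul_eq_mul]
  exact (mul_eq_mul_right_iff.mp h).resolve_left hμρ

theorem Complex.exists_norm_eq_one_mul_eq_norm_mul (μ : ℂ) {c : ℂ} (hc : ‖c‖ = 1) :
    ∃ c' : ℂ, ‖c'‖ = 1 ∧ c' * μ = ‖μ‖ * c := by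
  refine ⟨c * exp (-μ.arg * I), ?_, ?_⟩
  · rw [norm_mul, hc, ← ofReal_neg, norm_exp_ofReal_mul_I, one_mul]
  · have hpolar := norm_mul_exp_arg_mul_I μ
    have hinv : exp (-μ.arg * I) * exp (μ.arg * I) = 1 := by
      rw [← exp_add, neg_mul, neg_add_cancel, exp_zero]
    linear_combination (-(c * exp (-μ.arg * I))) * hpolar + (c * ‖μ‖) * hinv

theorem Complex.exists_norm_eq_one_re_comp_smul_ne_zero {ι : Type*} {z : ι → ℂ} (hz : z ≠ 0) :
    ∃ c : ℂ, ‖c‖ = 1 ∧ re ∘ (c • z) ≠ 0 := by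
  by_contra! h
  apply hz
  ext i : 1
  apply Complex.ext
  · simpa using congrFun (h 1 (by simp)) i
  · simpa using congrFun (h (-I) (by simp)) i

section ErgodicityCoeff

variable {ι : Type*} [Fintype ι]

theorem Complex.re_comp_vecMul_map_ofReal (z : ι → ℂ) (A : Matrix ι ι ℝ) :
    re ∘ (z ᵥ* A.map ofReal) = (re ∘ z) ᵥ* A := by
  ext j
  simp [vecMul, dotProduct, re_sum]

theorem Complex.re_dotProduct_ofReal_comp (z : ι → ℂ) (x : ι → ℝ) :
    (z ⬝ᵥ (ofReal ∘ x)).re = (re ∘ z) ⬝ᵥ x := by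
  simp [dotProduct, re_sum]

/-- The coefficient `τ(x, A)` of the statement, for the norm `p`. -/
noncomputable def ergodicityCoeff (p : Seminorm ℝ (ι → ℝ)) (A : Matrix ι ι ℝ) (x : ι → ℝ) : ℝ :=
  sSup {r : ℝ | ∃ z : ι → ℝ, p z ≤ 1 ∧ z ⬝ᵥ x = 0 ∧ r = p (z ᵥ* A)}

variable {p : Seminorm ℝ (ι → ℝ)} (hp : ∀ y, p y = 0 → y = 0) {A : Matrix ι ι ℝ} {x : ι → ℝ}
include hp

theorem bddAbove_ergodicityCoeff_set :
    BddAbove {r : ℝ | ∃ z : ι → ℝ, p z ≤ 1 ∧ z ⬝ᵥ x = 0 ∧ r = p (z ᵥ* A)} := by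
  have hcont : Continuous fun z : ι → ℝ => p (z ᵥ* A) :=
    p.continuous_of_finiteDimensional_s19.comp (continuous_id.matrix_vecMul continuous_const)
  refine ((p.isCompact_closedBall_of_finiteDimensional hp 1).bddAbove_image
    hcont.continuousOn).mono ?_
  rintro _ ⟨z, hz, -, rfl⟩
  exact ⟨z, p.mem_closedBall_zero.mpr hz, rfl⟩

theorem ergodicityCoeff_nonneg : 0 ≤ ergodicityCoeff p A x :=
  le_csSup (bddAbove_ergodicityCoeff_set hp) ⟨0, by simp, by simp, by simp⟩

theorem apply_vecMul_le_ergodicityCoeff_mul {y : ι → ℝ} (hy : y ⬝ᵥ x = 0) :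
    p (y ᵥ* A) ≤ ergodicityCoeff p A x * p y := by
  rcases eq_or_ne y 0 with rfl | hy0
  · simp
  have hpy : 0 < p y := (apply_nonneg p y).lt_of_ne fun h => hy0 (hp y h.symm)
  rw [← div_le_iff₀ hpy]
  refine le_csSup (bddAbove_ergodicityCoeff_set hp) ⟨(p y)⁻¹ • y, ?_, ?_, ?_⟩
  · rw [map_smul_eq_mul, norm_inv, Real.norm_of_nonneg hpy.le, inv_mul_cancel₀ hpy.ne']
  · rw [smul_dotProduct, hy, smul_zero]
  · rw [smul_vecMul, map_smul_eq_mul, norm_inv, Real.norm_of_nonneg hpy.le, div_eq_inv_mul]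

theorem norm_le_ergodicityCoeff_of_vecMul_eq_smul {μ : ℂ} {z : ι → ℂ} (hz : z ≠ 0)
    (hzA : z ᵥ* A.map Complex.ofReal = μ • z) (hzx : z ⬝ᵥ (Complex.ofReal ∘ x) = 0) :
    ‖μ‖ ≤ ergodicityCoeff p A x := by
  set f : ℂ → ℝ := fun c => p (Complex.re ∘ (c • z)) with hf
  have hf_cont : Continuous f := p.continuous_of_finiteDimensional_s19.comp <|
    continuous_pi fun i => Complex.continuous_re.comp (continuous_id.mul continuous_const)
  have hf_real : ∀ (r : ℝ) c, f (r * c) = |r| * f c := by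
    intro r c
    have hre : Complex.re ∘ ((r * c) • z) = r • (Complex.re ∘ (c • z)) := by
      ext i
      simp [mul_assoc]
    simp only [hf, hre, map_smul_eq_mul, Real.norm_eq_abs]
  obtain ⟨c₀, hc₀, hmax⟩ := (isCompact_sphere (0 : ℂ) 1).exists_isMaxOn
    (NormedSpace.sphere_nonempty.mpr zero_le_one) hf_cont.continuousOn
  have hpos : 0 < f c₀ := by
    obtain ⟨c, hc, hre⟩ := Complex.exists_norm_eq_one_re_comp_smul_ne_zero hz
    exact ((apply_nonneg p _).lt_of_ne fun h => hre (hp _ h.symm)).trans_le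
      (hmax (mem_sphere_zero_iff_norm.mpr hc))
  obtain ⟨c₁, hc₁, hc₁μ⟩ :=
    Complex.exists_norm_eq_one_mul_eq_norm_mul μ (mem_sphere_zero_iff_norm.mp hc₀)
  have hτ : ‖μ‖ * f c₀ ≤ ergodicityCoeff p A x * f c₀ :=
    calc ‖μ‖ * f c₀ = f (c₁ * μ) := by rw [hc₁μ, hf_real, abs_norm]
      _ = p (Complex.re ∘ (c₁ • z) ᵥ* A) := by
        rw [← Complex.re_comp_vecMul_map_ofReal, smul_vecMul, hzA, smul_smul]
      _ ≤ ergodicityCoeff p A x * f c₁ := by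
        refine apply_vecMul_le_ergodicityCoeff_mul hp ?_
        rw [← Complex.re_dotProduct_ofReal_comp, smul_dotProduct, hzx, smul_zero, Complex.zero_re]
      _ ≤ ergodicityCoeff p A x * f c₀ :=
        mul_le_mul_of_nonneg_left (hmax (mem_sphere_zero_iff_norm.mpr hc₁))
          (ergodicityCoeff_nonneg hp)
  exact le_of_mul_le_mul_right hτ hpos

end ErgodicityCoeff

theorem stmt_19_general (n : ℕ) (A : Matrix (Fin n) (Fin n) ℝ)
    (ρ : ℝ)
    (x : Fin n → ℝ)
    (hAx : A.mulVec x = ρ • x)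
    (N : (Fin n → ℝ) → ℝ)
    (hN0 : ∀ y, N y = 0 ↔ y = 0)
    (hNh : ∀ (a : ℝ) y, N (a • y) = |a| * N y)
    (hNt : ∀ y z, N (y + z) ≤ N y + N z) :
    ∀ μ ∈ spectrum ℂ (A.map Complex.ofReal), μ ≠ (ρ : ℂ) →
      ‖μ‖ ≤ sSup {r : ℝ | ∃ z : Fin n → ℝ, N z ≤ 1 ∧
        dotProduct z x = 0 ∧ r = N (Matrix.vecMul z A)} := by
  intro μ hμ hμρ
  obtain ⟨z, hz, hzA⟩ := exists_vecMul_eq_smul_of_mem_spectrum hμ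
  have hAxℂ : A.map Complex.ofReal *ᵥ (Complex.ofReal ∘ x) = (ρ : ℂ) • (Complex.ofReal ∘ x) := by
    ext i
    change (A.map Complex.ofRealHom *ᵥ Complex.ofRealHom ∘ x) i = _
    rw [← RingHom.map_mulVec, hAx]
    simp
  exact norm_le_ergodicityCoeff_of_vecMul_eq_smul (p := Seminorm.of N hNt hNh)
    (fun y => (hN0 y).mp) hz hzA
    (dotProduct_eq_zero_of_vecMul_eq_smul_of_mulVec_eq_smul hzA hAxℂ hμρ)

/-- Let `A ∈ M_n(ℝ)` be nonnegative and `x ≥ 0` a right eigenvector with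
`A x = ρ(A) x`, where `ρ(A)` is the spectral radius (the largest modulus of the
complex eigenvalues of `A`).  Then for any norm `N` on `ℝⁿ`, every complex
eigenvalue `μ ≠ ρ(A)` of `A` satisfies
`|μ| ≤ τ(x, A) = max {N (zᵀ A) : z ∈ ℝⁿ, N z ≤ 1, zᵀ x = 0}`. -/
theorem stmt_19 (n : ℕ) (A : Matrix (Fin n) (Fin n) ℝ)
    (hA : ∀ i j, 0 ≤ A i j)
    (ρ : ℝ)
    (hρ : ρ = sSup ((fun w : ℂ => ‖w‖) '' spectrum ℂ (A.map Complex.ofReal)))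
    (x : Fin n → ℝ) (hx : ∀ i, 0 ≤ x i) (hx0 : x ≠ 0)
    (hAx : A.mulVec x = ρ • x)
    (N : (Fin n → ℝ) → ℝ)
    (hN0 : ∀ y, N y = 0 ↔ y = 0)
    (hNh : ∀ (a : ℝ) y, N (a • y) = |a| * N y)
    (hNt : ∀ y z, N (y + z) ≤ N y + N z) :
    ∀ μ ∈ spectrum ℂ (A.map Complex.ofReal), μ ≠ (ρ : ℂ) →
      ‖μ‖ ≤ sSup {r : ℝ | ∃ z : Fin n → ℝ, N z ≤ 1 ∧
        dotProduct z x = 0 ∧ r = N (Matrix.vecMul z A)} :=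
  stmt_19_general n A ρ x hAx N hN0 hNh hNt
end
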